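/- Let γ₀ = (−1+√17)/2 and let α, β ∈ [γ₀, 2). Let n₁, n₂ ≥ 1, N = n₁n₂, let r, s > 0, and let D₊, D₋, E₊, E₋ be N×N diagonal matrices with nonnegative diagonal entries. Then the matrix 𝓜 = (1/r)I_N + D₊(I_{n₂}⊗A_{n₁}^α) + D₋(I_{n₂}⊗(A_{n₁}^α)ᵀ) + (s/r)E₊(A_{n₂}^β⊗I_{n₁}) + (s/r)E₋((A_{n₂}^β)ᵀ⊗I_{n₁}) has strictly positive diagonal entries, nonpositive off-diagonal entries, and is strictly diagonally dominant by rows (for every row the diagonal entry strictly exceeds the sum of the absolute values of the off-diagonal entries); in particular 𝓜 is a nonsingular M-matrix. -/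

import Mathlib

open scoped Real Topology Kronecker
open Matrix

/-- Alternating fractional binomial coefficients. -/
noncomputable def gcoef (γ : ℝ) (k : ℕ) : ℝ :=
  (-1 : ℝ) ^ k / (Nat.factorial k) * ∏ i ∈ Finset.range k, (γ - i)

/-- WSGD weights. -/
noncomputable def w (γ : ℝ) : ℕ → ℝ
  | 0 => γ / 2 * gcoef γ 0
  | (k + 1) => γ / 2 * gcoef γ (k + 1) + (2 - γ) / 2 * gcoef γ k

/-- WSGD weights extended to ℤ by zero on negative indices. -/
noncomputable def wZ (γ : ℝ) (z : ℤ) : ℝ :=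
  if 0 ≤ z then w γ z.toNat else 0

/-- The Toeplitz matrix `A_n^γ` with `(i,j)` entry `-w_{i-j+1}^{(γ)}`. -/
noncomputable def Amat (γ : ℝ) (n : ℕ) : Matrix (Fin n) (Fin n) ℝ :=
  Matrix.of fun i j => -wZ γ (((i : ℕ) : ℤ) - ((j : ℕ) : ℤ) + 1)

/-!
Write `𝓜 = (1/r) I + B`. The matrices `A^γ` and `(A^γ)ᵀ` are Z-matrices with nonnegative row
sums: their off-diagonal entries are `-w_k` with `k ≠ 1`, and their row sums are minus partial
sums `∑_{k ≤ m} w_k` with `m ≥ 1`. Since `∑_{k ≤ m} g_k^{(γ)} = g_m^{(γ-1)}`, such a partial sum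
equals `(γ/2) g_m^{(γ-1)} + ((2-γ)/2) g_{m-1}^{(γ-1)}`, which is `≤ 0` because `g_k^{(γ-1)} ≤ 0`
for `k ≥ 1` when `0 ≤ γ - 1 ≤ 1`. This class of matrices is closed under sums, nonnegative
(diagonal) scalings and Kronecker products with `I`, so `B` belongs to it; then `𝓜` is a Z-matrix
with positive row sums, hence strictly diagonally dominant and, by Gershgorin, nonsingular.
-/

lemma gcoef_zero (γ : ℝ) : gcoef γ 0 = 1 := by simp [gcoef]

lemma gcoef_succ (γ : ℝ) (k : ℕ) :
    gcoef γ (k + 1) = gcoef γ k * ((k - γ) / (k + 1)) := by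
  simp only [gcoef, Finset.prod_range_succ, Nat.factorial_succ]
  push_cast
  field_simp
  ring

lemma gcoef_one (γ : ℝ) : gcoef γ 1 = -γ := by
  simp [gcoef_succ, gcoef_zero]

lemma gcoef_two (γ : ℝ) : gcoef γ 2 = γ * (γ - 1) / 2 := by
  rw [gcoef_succ, gcoef_one]; push_cast; ring

lemma gcoef_succ_eq_gcoef_sub_one (γ : ℝ) (k : ℕ) :
    gcoef γ (k + 1) = gcoef (γ - 1) k * (-γ / (k + 1)) := by
  simp only [gcoef, Finset.prod_range_succ', Nat.factorial_succ]
  push_cast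
  field_simp
  ring_nf

lemma sum_range_gcoef (γ : ℝ) (m : ℕ) :
    ∑ k ∈ Finset.range (m + 1), gcoef γ k = gcoef (γ - 1) m := by
  induction m with
  | zero => simp [gcoef_zero]
  | succ m ih =>
    rw [Finset.sum_range_succ, ih, gcoef_succ_eq_gcoef_sub_one, gcoef_succ]
    field_simp
    ring

lemma gcoef_nonpos {γ : ℝ} (h0 : 0 ≤ γ) (h1 : γ ≤ 1) {k : ℕ} (hk : 1 ≤ k) :
    gcoef γ k ≤ 0 := by
  induction k, hk using Nat.le_induction with
  | base => rw [gcoef_one]; linarith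
  | succ k hk ih =>
    have : (1 : ℝ) ≤ k := by exact_mod_cast hk
    rw [gcoef_succ]
    exact mul_nonpos_of_nonpos_of_nonneg ih (div_nonneg (by linarith) (by positivity))

lemma gcoef_nonneg {γ : ℝ} (h1 : 1 ≤ γ) (h2 : γ ≤ 2) {k : ℕ} (hk : 2 ≤ k) :
    0 ≤ gcoef γ k := by
  induction k, hk using Nat.le_induction with
  | base =>
    have : 0 ≤ γ - 1 := by linarith
    rw [gcoef_two]
    positivity
  | succ k hk ih =>
    have : (2 : ℝ) ≤ k := by exact_mod_cast hk
    rw [gcoef_succ]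
    exact mul_nonneg ih (div_nonneg (by linarith) (by positivity))

lemma w_nonneg {γ : ℝ} (h1 : 1 ≤ γ) (h2 : γ ≤ 2) (h4 : 4 ≤ γ ^ 2 + γ) {k : ℕ}
    (hk : k ≠ 1) : 0 ≤ w γ k := by
  match k, hk with
  | 0, _ => simp only [w, gcoef_zero]; linarith
  | 2, _ =>
    show 0 ≤ γ / 2 * gcoef γ 2 + (2 - γ) / 2 * gcoef γ 1
    rw [gcoef_two, gcoef_one]
    nlinarith
  | k + 3, _ =>
    have := gcoef_nonneg h1 h2 (k := k + 3) (by omega)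
    have := gcoef_nonneg h1 h2 (k := k + 2) (by omega)
    have : 0 ≤ 2 - γ := by linarith
    simp only [w]
    positivity

lemma sum_range_w (γ : ℝ) (m : ℕ) :
    ∑ k ∈ Finset.range (m + 2), w γ k
      = γ / 2 * gcoef (γ - 1) (m + 1) + (2 - γ) / 2 * gcoef (γ - 1) m := by
  rw [← sum_range_gcoef, ← sum_range_gcoef, Finset.sum_range_succ' (w γ),
    Finset.sum_range_succ' (gcoef γ)]
  simp only [w, Finset.sum_add_distrib, Finset.mul_sum, mul_add]
  ring

lemma sum_range_w_nonpos {γ : ℝ} (h1 : 1 ≤ γ) (h2 : γ ≤ 2) (hsq : 2 ≤ γ ^ 2) {m : ℕ}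
    (hm : 2 ≤ m) : ∑ k ∈ Finset.range m, w γ k ≤ 0 := by
  obtain ⟨m, rfl⟩ := Nat.exists_eq_add_of_le' hm
  rw [sum_range_w]
  rcases Nat.eq_zero_or_pos m with rfl | hm
  · rw [gcoef_one, gcoef_zero]; nlinarith
  · have := gcoef_nonpos (γ := γ - 1) (by linarith) (by linarith) (k := m + 1) (by omega)
    have := gcoef_nonpos (γ := γ - 1) (by linarith) (by linarith) hm
    nlinarith

lemma w_zero (γ : ℝ) : w γ 0 = γ / 2 := by simp [w, gcoef_zero]

lemma wZ_natCast (γ : ℝ) (k : ℕ) : wZ γ k = w γ k := by simp [wZ]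

lemma wZ_of_neg (γ : ℝ) {z : ℤ} (hz : z < 0) : wZ γ z = 0 := by simp [wZ, hz]

lemma wZ_nonneg {γ : ℝ} (h1 : 1 ≤ γ) (h2 : γ ≤ 2) (h4 : 4 ≤ γ ^ 2 + γ) {z : ℤ}
    (hz : z ≠ 1) : 0 ≤ wZ γ z := by
  unfold wZ
  split_ifs with h
  · exact w_nonneg h1 h2 h4 (by omega)
  · rfl

-- A full Toeplitz row `j ↦ w_{c-j}` contains every `w_k` with `k ≤ c`,
-- except `w_0 ≥ 0` when `c = n`.
lemma sum_range_wZ_sub_le {γ : ℝ} (hγ : 0 ≤ γ) {n c : ℕ} (hc : c ≤ n) :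
    ∑ j ∈ Finset.range n, wZ γ ((c : ℤ) - j) ≤ ∑ k ∈ Finset.range (c + 1), w γ k := by
  have hfull : ∑ j ∈ Finset.range (c + 1), wZ γ ((c : ℤ) - j)
      = ∑ k ∈ Finset.range (c + 1), w γ k := by
    rw [← Finset.sum_range_reflect]
    refine Finset.sum_congr rfl fun j hj => ?_
    rw [Finset.mem_range] at hj
    rw [← wZ_natCast]
    congr 1
    omega
  rcases hc.lt_or_eq with hlt | rfl
  · have htail : ∑ j ∈ Finset.Ico (c + 1) n, wZ γ ((c : ℤ) - j) = 0 :=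
      Finset.sum_eq_zero fun j hj => wZ_of_neg γ (by rw [Finset.mem_Ico] at hj; omega)
    rw [← hfull, ← Finset.sum_range_add_sum_Ico _ hlt, htail, add_zero]
  · rw [← hfull, Finset.sum_range_succ, sub_self, ← Nat.cast_zero, wZ_natCast, w_zero]
    linarith

lemma sum_range_wZ_sub_nonpos {γ : ℝ} (h1 : 1 ≤ γ) (h2 : γ ≤ 2) (h4 : 4 ≤ γ ^ 2 + γ)
    {n c : ℕ} (hc1 : 1 ≤ c) (hc : c ≤ n) :
    ∑ j ∈ Finset.range n, wZ γ ((c : ℤ) - j) ≤ 0 :=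
  (sum_range_wZ_sub_le (by linarith) hc).trans
    (sum_range_w_nonpos h1 h2 (by nlinarith) (by omega))

namespace Matrix

variable {ι κ : Type*} [Fintype ι] [Fintype κ]

structure IsZMatrixRowSumNonneg (A : Matrix ι ι ℝ) : Prop where
  offDiag_nonpos : ∀ i j, i ≠ j → A i j ≤ 0
  rowSum_nonneg : ∀ i, 0 ≤ ∑ j, A i j

namespace IsZMatrixRowSumNonneg

variable {A B : Matrix ι ι ℝ}

lemma add (hA : A.IsZMatrixRowSumNonneg) (hB : B.IsZMatrixRowSumNonneg) :
    (A + B).IsZMatrixRowSumNonneg where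
  offDiag_nonpos i j hij := add_nonpos (hA.offDiag_nonpos i j hij) (hB.offDiag_nonpos i j hij)
  rowSum_nonneg i := by
    simpa only [add_apply, Finset.sum_add_distrib] using
      add_nonneg (hA.rowSum_nonneg i) (hB.rowSum_nonneg i)

lemma smul (hA : A.IsZMatrixRowSumNonneg) {c : ℝ} (hc : 0 ≤ c) :
    (c • A).IsZMatrixRowSumNonneg where
  offDiag_nonpos i j hij := mul_nonpos_of_nonneg_of_nonpos hc (hA.offDiag_nonpos i j hij)
  rowSum_nonneg i := by
    simpa only [smul_apply, smul_eq_mul, ← Finset.mul_sum] using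
      mul_nonneg hc (hA.rowSum_nonneg i)

lemma diagonal_mul [DecidableEq ι] (hA : A.IsZMatrixRowSumNonneg) {d : ι → ℝ}
    (hd : ∀ i, 0 ≤ d i) : (diagonal d * A).IsZMatrixRowSumNonneg where
  offDiag_nonpos i j hij := by
    rw [Matrix.diagonal_mul]
    exact mul_nonpos_of_nonneg_of_nonpos (hd i) (hA.offDiag_nonpos i j hij)
  rowSum_nonneg i := by
    simpa only [Matrix.diagonal_mul, ← Finset.mul_sum] using
      mul_nonneg (hd i) (hA.rowSum_nonneg i)

lemma sum_kronecker_apply (A : Matrix ι ι ℝ) (B : Matrix κ κ ℝ) (p : ι × κ) :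
    ∑ q, (A ⊗ₖ B) p q = (∑ i, A p.1 i) * ∑ k, B p.2 k := by
  simp only [Fintype.sum_prod_type, kroneckerMap_apply, Finset.sum_mul_sum]

lemma one_kronecker [DecidableEq ι] {A : Matrix κ κ ℝ} (hA : A.IsZMatrixRowSumNonneg) :
    ((1 : Matrix ι ι ℝ) ⊗ₖ A).IsZMatrixRowSumNonneg where
  offDiag_nonpos p q hpq := by
    rw [kroneckerMap_apply, one_apply]
    split_ifs with h
    · exact (one_mul _).trans_le (hA.offDiag_nonpos _ _ fun h' => hpq (Prod.ext h h'))
    · exact (zero_mul _).le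
  rowSum_nonneg p := by
    rw [sum_kronecker_apply]
    simpa [one_apply] using hA.rowSum_nonneg p.2

lemma kronecker_one [DecidableEq κ] (hA : A.IsZMatrixRowSumNonneg) :
    (A ⊗ₖ (1 : Matrix κ κ ℝ)).IsZMatrixRowSumNonneg where
  offDiag_nonpos p q hpq := by
    rw [kroneckerMap_apply, one_apply]
    split_ifs with h
    · exact (mul_one _).trans_le (hA.offDiag_nonpos _ _ fun h' => hpq (Prod.ext h' h))
    · exact (mul_zero _).le
  rowSum_nonneg p := by
    rw [sum_kronecker_apply]
    simpa [one_apply] using hA.rowSum_nonneg p.1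

lemma one [DecidableEq ι] : (1 : Matrix ι ι ℝ).IsZMatrixRowSumNonneg where
  offDiag_nonpos i j hij := (one_apply_ne hij).le
  rowSum_nonneg i := by simp [one_apply]

lemma smul_one_add [DecidableEq ι] (hB : B.IsZMatrixRowSumNonneg) {c : ℝ} (hc : 0 ≤ c) :
    (c • 1 + B).IsZMatrixRowSumNonneg :=
  (one.smul hc).add hB

lemma rowSum_smul_one_add_pos [DecidableEq ι] (hB : B.IsZMatrixRowSumNonneg) {c : ℝ}
    (hc : 0 < c) (i : ι) : 0 < ∑ j, (c • 1 + B) i j := by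
  simpa [one_apply, Finset.sum_add_distrib] using add_pos_of_pos_of_nonneg hc (hB.rowSum_nonneg i)

lemma sum_abs_offDiag_lt [DecidableEq ι] (hA : A.IsZMatrixRowSumNonneg) {i : ι}
    (hi : 0 < ∑ j, A i j) : ∑ j ∈ Finset.univ.erase i, |A i j| < A i i := by
  have habs : ∑ j ∈ Finset.univ.erase i, |A i j| = -∑ j ∈ Finset.univ.erase i, A i j := by
    rw [← Finset.sum_neg_distrib]
    exact Finset.sum_congr rfl fun j hj =>
      abs_of_nonpos (hA.offDiag_nonpos i j (Finset.ne_of_mem_erase hj).symm)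
  linarith [Finset.sum_erase_add _ (A i) (Finset.mem_univ i)]

lemma diag_pos [DecidableEq ι] (hA : A.IsZMatrixRowSumNonneg) {i : ι} (hi : 0 < ∑ j, A i j) :
    0 < A i i :=
  (Finset.sum_nonneg fun _ _ => abs_nonneg _).trans_lt (hA.sum_abs_offDiag_lt hi)

lemma isUnit [DecidableEq ι] (hA : A.IsZMatrixRowSumNonneg) (h : ∀ i, 0 < ∑ j, A i j) :
    IsUnit A := by
  refine (isUnit_iff_isUnit_det A).mpr (det_ne_zero_of_sum_row_lt_diag fun i => ?_).isUnit
  simpa only [Real.norm_eq_abs, abs_of_pos (hA.diag_pos (h i))] using hA.sum_abs_offDiag_lt (h i)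

end IsZMatrixRowSumNonneg

end Matrix

lemma Amat_offDiag_nonpos {γ : ℝ} (h1 : 1 ≤ γ) (h2 : γ ≤ 2) (h4 : 4 ≤ γ ^ 2 + γ)
    {n : ℕ} {i j : Fin n} (hij : i ≠ j) : Amat γ n i j ≤ 0 :=
  neg_nonpos.mpr (wZ_nonneg h1 h2 h4 (by have := Fin.val_ne_of_ne hij; omega))

lemma sum_Amat_row (γ : ℝ) {n : ℕ} (i : Fin n) :
    ∑ j, Amat γ n i j = -∑ j ∈ Finset.range n, wZ γ (((i + 1 : ℕ) : ℤ) - j) := by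
  rw [← Finset.sum_neg_distrib, ← Fin.sum_univ_eq_sum_range]
  refine Finset.sum_congr rfl fun j _ => ?_
  simp only [Amat, of_apply]
  push_cast
  ring_nf

lemma sum_Amat_col (γ : ℝ) {n : ℕ} (j : Fin n) :
    ∑ i, Amat γ n i j = -∑ i ∈ Finset.range n, wZ γ (((n - j : ℕ) : ℤ) - i) := by
  rw [← Finset.sum_range_reflect, ← Finset.sum_neg_distrib, ← Fin.sum_univ_eq_sum_range]
  refine Finset.sum_congr rfl fun i _ => ?_
  simp only [Amat, of_apply]
  congr 2
  omega

lemma isZMatrixRowSumNonneg_Amat {γ : ℝ} (h1 : 1 ≤ γ) (h2 : γ ≤ 2) (h4 : 4 ≤ γ ^ 2 + γ)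
    (n : ℕ) : (Amat γ n).IsZMatrixRowSumNonneg where
  offDiag_nonpos _ _ := Amat_offDiag_nonpos h1 h2 h4
  rowSum_nonneg i := by
    rw [sum_Amat_row, neg_nonneg]
    exact sum_range_wZ_sub_nonpos h1 h2 h4 (by omega) (by omega)

lemma isZMatrixRowSumNonneg_Amat_transpose {γ : ℝ} (h1 : 1 ≤ γ) (h2 : γ ≤ 2)
    (h4 : 4 ≤ γ ^ 2 + γ) (n : ℕ) : (Amat γ n)ᵀ.IsZMatrixRowSumNonneg where
  offDiag_nonpos _ _ hij := Amat_offDiag_nonpos h1 h2 h4 hij.symm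
  rowSum_nonneg j := by
    rw [show ∑ i, (Amat γ n)ᵀ j i = ∑ i, Amat γ n i j from rfl, sum_Amat_col, neg_nonneg]
    exact sum_range_wZ_sub_nonpos h1 h2 h4 (by omega) (by omega)

lemma one_le_and_four_le_sq_add_self {γ : ℝ} (hγ : (-1 + Real.sqrt 17) / 2 ≤ γ) :
    1 ≤ γ ∧ 4 ≤ γ ^ 2 + γ := by
  have h17 : Real.sqrt 17 ^ 2 = 17 := Real.sq_sqrt (by norm_num)
  have h3 : 3 < Real.sqrt 17 := by nlinarith [Real.sqrt_nonneg 17]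
  constructor <;> nlinarith

theorem coefficient_matrix_is_M_matrix_general (α β : ℝ)
    (hα1 : (-1 + Real.sqrt 17) / 2 ≤ α) (hα2 : α < 2)
    (hβ1 : (-1 + Real.sqrt 17) / 2 ≤ β) (hβ2 : β < 2)
    (n₁ n₂ : ℕ) (r s : ℝ) (hr : 0 < r) (hs : 0 < s)
    (dp dm ep em : Fin n₂ × Fin n₁ → ℝ)
    (hdp : ∀ i, 0 ≤ dp i) (hdm : ∀ i, 0 ≤ dm i)
    (hep : ∀ i, 0 ≤ ep i) (hem : ∀ i, 0 ≤ em i) :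
    let M := (1 / r) • (1 : Matrix (Fin n₂ × Fin n₁) (Fin n₂ × Fin n₁) ℝ)
      + Matrix.diagonal dp * ((1 : Matrix (Fin n₂) (Fin n₂) ℝ) ⊗ₖ Amat α n₁)
      + Matrix.diagonal dm * ((1 : Matrix (Fin n₂) (Fin n₂) ℝ) ⊗ₖ (Amat α n₁)ᵀ)
      + (s / r) • (Matrix.diagonal ep * (Amat β n₂ ⊗ₖ (1 : Matrix (Fin n₁) (Fin n₁) ℝ)))
      + (s / r) • (Matrix.diagonal em * ((Amat β n₂)ᵀ ⊗ₖ (1 : Matrix (Fin n₁) (Fin n₁) ℝ)))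
    (∀ i, 0 < M i i) ∧
    (∀ i j, i ≠ j → M i j ≤ 0) ∧
    (∀ i, ∑ j ∈ Finset.univ.erase i, |M i j| < M i i) ∧
    IsUnit M := by
  intro M
  obtain ⟨hα1, hα4⟩ := one_le_and_four_le_sq_add_self hα1
  obtain ⟨hβ1, hβ4⟩ := one_le_and_four_le_sq_add_self hβ1
  have hAα := isZMatrixRowSumNonneg_Amat hα1 hα2.le hα4 n₁
  have hAαT := isZMatrixRowSumNonneg_Amat_transpose hα1 hα2.le hα4 n₁
  have hAβ := isZMatrixRowSumNonneg_Amat hβ1 hβ2.le hβ4 n₂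
  have hAβT := isZMatrixRowSumNonneg_Amat_transpose hβ1 hβ2.le hβ4 n₂
  have hsr : 0 ≤ s / r := by positivity
  have hB := (hAα.one_kronecker.diagonal_mul hdp).add (hAαT.one_kronecker.diagonal_mul hdm)
    |>.add ((hAβ.kronecker_one.diagonal_mul hep).smul hsr)
    |>.add ((hAβT.kronecker_one.diagonal_mul hem).smul hsr)
  have hr' : 0 < 1 / r := one_div_pos.mpr hr
  -- `add_assoc` regroups `M` as `(1 / r) • 1 + B`.
  obtain ⟨hM, hpos⟩ : M.IsZMatrixRowSumNonneg ∧ ∀ i, 0 < ∑ j, M i j := by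
    simpa only [M, add_assoc] using
      And.intro (hB.smul_one_add hr'.le) (hB.rowSum_smul_one_add_pos hr')
  exact ⟨fun i => hM.diag_pos (hpos i), hM.offDiag_nonpos,
    fun i => hM.sum_abs_offDiag_lt (hpos i), hM.isUnit hpos⟩

/-- For `α, β ∈ [γ₀, 2)` with `γ₀ = (−1+√17)/2` and nonnegative diagonal diffusion
matrices, the CN-WSGD coefficient matrix `𝓜` has positive diagonal, nonpositive
off-diagonal entries and is strictly diagonally dominant by rows; in particular it is a
nonsingular M-matrix. -/
theorem coefficient_matrix_is_M_matrix (α β : ℝ)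
    (hα1 : (-1 + Real.sqrt 17) / 2 ≤ α) (hα2 : α < 2)
    (hβ1 : (-1 + Real.sqrt 17) / 2 ≤ β) (hβ2 : β < 2)
    (n₁ n₂ : ℕ) (hn₁ : 1 ≤ n₁) (hn₂ : 1 ≤ n₂) (r s : ℝ) (hr : 0 < r) (hs : 0 < s)
    (dp dm ep em : Fin n₂ × Fin n₁ → ℝ)
    (hdp : ∀ i, 0 ≤ dp i) (hdm : ∀ i, 0 ≤ dm i)
    (hep : ∀ i, 0 ≤ ep i) (hem : ∀ i, 0 ≤ em i) :
    let M := (1 / r) • (1 : Matrix (Fin n₂ × Fin n₁) (Fin n₂ × Fin n₁) ℝ)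
      + Matrix.diagonal dp * ((1 : Matrix (Fin n₂) (Fin n₂) ℝ) ⊗ₖ Amat α n₁)
      + Matrix.diagonal dm * ((1 : Matrix (Fin n₂) (Fin n₂) ℝ) ⊗ₖ (Amat α n₁)ᵀ)
      + (s / r) • (Matrix.diagonal ep * (Amat β n₂ ⊗ₖ (1 : Matrix (Fin n₁) (Fin n₁) ℝ)))
      + (s / r) • (Matrix.diagonal em * ((Amat β n₂)ᵀ ⊗ₖ (1 : Matrix (Fin n₁) (Fin n₁) ℝ)))
    (∀ i, 0 < M i i) ∧
    (∀ i j, i ≠ j → M i j ≤ 0) ∧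
    (∀ i, ∑ j ∈ Finset.univ.erase i, |M i j| < M i i) ∧
    IsUnit M :=
  coefficient_matrix_is_M_matrix_general α β hα1 hα2 hβ1 hβ2 n₁ n₂ r s hr hs dp dm ep em hdp hdm hep
    hem
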